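/- arXiv:math-ph/0505010 — 5 statements merged into one kernel-verified Lean document; each statement's English description precedes it below -/
import Mathlib

section
/- Let D ⊆ ℝ² be open and E : D → ℝ smooth. Suppose there exists a nonzero vector (γ₁, γ₂, γ₃) ∈ ℝ³ such that γ₁·∂²E/∂x¹∂x¹ + γ₂·∂²E/∂x¹∂x² + γ₃·∂²E/∂x²∂x² = 0 at every point of D. Then at every point of D where det Hess E ≠ 0, the scalar curvature R of the Hessian metric of E vanishes. -/
/-- Partial derivative `∂f/∂x¹` (first coordinate) of a function on `ℝ²`. -/
noncomputable def pS (f : ℝ × ℝ → ℝ) (x : ℝ × ℝ) : ℝ := fderiv ℝ f x (1, 0)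

/-- Partial derivative `∂f/∂x²` (second coordinate) of a function on `ℝ²`. -/
noncomputable def pV (f : ℝ × ℝ → ℝ) (x : ℝ × ℝ) : ℝ := fderiv ℝ f x (0, 1)

/-- Hessian metric entry `η₁₁ = ∂²E/∂x¹∂x¹`. -/
noncomputable def e11 (E : ℝ × ℝ → ℝ) : ℝ × ℝ → ℝ := pS (pS E)

/-- Hessian metric entry `η₁₂ = ∂²E/∂x¹∂x²`. -/
noncomputable def e12 (E : ℝ × ℝ → ℝ) : ℝ × ℝ → ℝ := pV (pS E)

/-- Hessian metric entry `η₂₂ = ∂²E/∂x²∂x²`. -/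
noncomputable def e22 (E : ℝ × ℝ → ℝ) : ℝ × ℝ → ℝ := pV (pV E)

/-- Determinant `det η = η₁₁η₂₂ − η₁₂²` of the Hessian metric of `E`. -/
noncomputable def detHess (E : ℝ × ℝ → ℝ) (x : ℝ × ℝ) : ℝ :=
  e11 E x * e22 E x - (e12 E x) ^ 2

/-- Determinant of the 3×3 matrix `M` with rows `(η₁₁, ∂₁η₁₁, ∂₂η₁₁)`,
`(η₁₂, ∂₁η₁₂, ∂₂η₁₂)`, `(η₂₂, ∂₁η₂₂, ∂₂η₂₂)`. -/
noncomputable def detM (E : ℝ × ℝ → ℝ) (x : ℝ × ℝ) : ℝ :=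
  Matrix.det !![e11 E x, pS (e11 E) x, pV (e11 E) x;
                e12 E x, pS (e12 E) x, pV (e12 E) x;
                e22 E x, pS (e22 E) x, pV (e22 E) x]

/-- Scalar curvature `R = −(1/(4(det η)²))·det M` of the Hessian metric of `E`. -/
noncomputable def scalarCurv (E : ℝ × ℝ → ℝ) (x : ℝ × ℝ) : ℝ :=
  -(1 / (4 * (detHess E x) ^ 2)) * detM E x

/-! Differentiating the relation `γ₁ η₁₁ + γ₂ η₁₂ + γ₃ η₂₂ = 0`, which holds on the open set `D`,
shows that the nonzero row vector `(γ₁, γ₂, γ₃)` annihilates all three columns of `M`. Hence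
`det M = 0`, and so `R = 0`. -/

open Finset

section

variable {𝕜 E F : Type*} [NontriviallyNormedField 𝕜] [NormedAddCommGroup E] [NormedSpace 𝕜 E]
  [NormedAddCommGroup F] [NormedSpace 𝕜 F]

theorem ContDiffOn.fderiv_apply_of_isOpen {f : E → F} {s : Set E}
    (hf : ContDiffOn 𝕜 (⊤ : ℕ∞) f s) (hs : IsOpen s) (v : E) :
    ContDiffOn 𝕜 (⊤ : ℕ∞) (fun x => fderiv 𝕜 f x v) s :=
  (hf.fderiv_of_isOpen hs (by norm_cast)).clm_apply contDiffOn_const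

theorem sum_smul_fderiv_eq_zero_of_isOpen {ι : Type*} [Fintype ι] {f : ι → E → 𝕜} {γ : ι → 𝕜}
    {s : Set E} (hs : IsOpen s) (hrel : ∀ y ∈ s, ∑ i, γ i * f i y = 0) {x : E} (hx : x ∈ s)
    (hf : ∀ i, DifferentiableAt 𝕜 (f i) x) : ∑ i, γ i • fderiv 𝕜 (f i) x = 0 := by
  have hloc : (fun y => ∑ i, γ i * f i y) =ᶠ[nhds x] fun _ => 0 :=
    Filter.eventually_of_mem (hs.mem_nhds hx) hrel
  rw [← hloc.fderiv_eq.trans (fderiv_const_apply 0),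
    fderiv_fun_sum fun i _ => (hf i).const_mul (γ i)]
  exact sum_congr rfl fun i _ => (fderiv_const_mul (hf i) (γ i)).symm

end

/-- If a nonzero constant vector `(γ₁,γ₂,γ₃)` satisfies
`γ₁·∂²E/∂x¹∂x¹ + γ₂·∂²E/∂x¹∂x² + γ₃·∂²E/∂x²∂x² = 0` on an open set `D`, then the scalar
curvature of the Hessian metric of `E` vanishes at every point of `D` where `det Hess E ≠ 0`. -/
theorem scalar_curvature_zero_of_linear_relation (D : Set (ℝ × ℝ)) (hD : IsOpen D)
    (E : ℝ × ℝ → ℝ) (hE : ContDiffOn ℝ (⊤ : ℕ∞) E D)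
    (γ₁ γ₂ γ₃ : ℝ) (hγ : ((γ₁, γ₂, γ₃) : ℝ × ℝ × ℝ) ≠ (0, 0, 0))
    (hrel : ∀ x ∈ D, γ₁ * e11 E x + γ₂ * e12 E x + γ₃ * e22 E x = 0) :
    ∀ x ∈ D, detHess E x ≠ 0 → scalarCurv E x = 0 := by
  intro x hx _
  set η : Fin 3 → ℝ × ℝ → ℝ := ![e11 E, e12 E, e22 E]
  set γ : Fin 3 → ℝ := ![γ₁, γ₂, γ₃]
  have hγ0 : γ ≠ 0 := fun h => hγ (by simpa [γ, Matrix.cons_eq_zero_iff] using h)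
  have hη : ∀ i, DifferentiableAt ℝ (η i) x := by
    have hpS : ∀ f : ℝ × ℝ → ℝ, ContDiffOn ℝ (⊤ : ℕ∞) f D → ContDiffOn ℝ (⊤ : ℕ∞) (pS f) D :=
      fun f hf => hf.fderiv_apply_of_isOpen hD (1, 0)
    have hpV : ∀ f : ℝ × ℝ → ℝ, ContDiffOn ℝ (⊤ : ℕ∞) f D → ContDiffOn ℝ (⊤ : ℕ∞) (pV f) D :=
      fun f hf => hf.fderiv_apply_of_isOpen hD (0, 1)
    have hdiff : ∀ f : ℝ × ℝ → ℝ, ContDiffOn ℝ (⊤ : ℕ∞) f D → DifferentiableAt ℝ f x :=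
      fun f hf => (hf.differentiableOn (by simp)).differentiableAt (hD.mem_nhds hx)
    intro i
    fin_cases i
    exacts [hdiff _ (hpS _ (hpS E hE)), hdiff _ (hpV _ (hpS E hE)), hdiff _ (hpV _ (hpV E hE))]
  have hdη := sum_smul_fderiv_eq_zero_of_isOpen (γ := γ) hD
    (fun y hy => by simpa [η, γ, Fin.sum_univ_three] using hrel y hy) hx hη
  have hdetM : detM E x = 0 := by
    refine Matrix.exists_vecMul_eq_zero_iff.mp ⟨γ, hγ0, ?_⟩
    have hS : γ₁ * pS (e11 E) x + γ₂ * pS (e12 E) x + γ₃ * pS (e22 E) x = 0 := by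
      simpa [η, γ, Fin.sum_univ_three, pS, pV] using DFunLike.congr_fun hdη (1, 0)
    have hV : γ₁ * pV (e11 E) x + γ₂ * pV (e12 E) x + γ₃ * pV (e22 E) x = 0 := by
      simpa [η, γ, Fin.sum_univ_three, pS, pV] using DFunLike.congr_fun hdη (0, 1)
    ext j
    fin_cases j <;> simp [γ, Matrix.vecMul, dotProduct, Fin.sum_univ_three, hrel x hx, hS, hV]
  rw [scalarCurv, hdetM, mul_zero]
end

section
/- Identity I: Under the elementary-system hypotheses, at every point of D one has (∂C_v/∂V) + (α/k)·(∂C_v/∂S) = (C_v/k)·(∂α/∂S) − (C_v·α/k²)·(∂k/∂S). -/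
/-!
Write `T = ∂U/∂S`. The hypotheses on `Hess U` say `∂T/∂S = T · a` and `∂T/∂V = T · b` with
`a = 1/C_v` and `b = -α/(k C_v)`, i.e. `a` and `b` are the partials of `log |T|`. Since `T` is
`C²` and nowhere zero, symmetry of its mixed partials forces `∂a/∂V = ∂b/∂S`, and expanding
this compatibility condition is exactly Identity I.
-/

open Filter Topology

section DirectionalDerivative

variable {𝕜 E : Type*} [NontriviallyNormedField 𝕜] [NormedAddCommGroup E] [NormedSpace 𝕜 E]
  {f g : E → 𝕜} {x : E}

lemma fderiv_fun_mul_apply (hf : DifferentiableAt 𝕜 f x) (hg : DifferentiableAt 𝕜 g x) (v : E) :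
    fderiv 𝕜 (fun y => f y * g y) x v = fderiv 𝕜 f x v * g x + f x * fderiv 𝕜 g x v := by
  rw [fderiv_fun_mul hf hg]
  simp only [add_apply, smul_apply, smul_eq_mul]
  ring

lemma fderiv_fun_inv_apply (hg : DifferentiableAt 𝕜 g x) (hgx : g x ≠ 0) (v : E) :
    fderiv 𝕜 (fun y => (g y)⁻¹) x v = -fderiv 𝕜 g x v / g x ^ 2 := by
  rw [show (fun y => (g y)⁻¹) = (·⁻¹) ∘ g from rfl,
    ((hasDerivAt_inv hgx).comp_hasFDerivAt x hg.hasFDerivAt).fderiv]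
  simp only [smul_apply, smul_eq_mul]
  ring

end DirectionalDerivative

lemma ContDiffAt.fderiv_fderiv_apply_comm {E F : Type*} [NormedAddCommGroup E] [NormedSpace ℝ E]
    [NormedAddCommGroup F] [NormedSpace ℝ F] {f : E → F} {x : E} (hf : ContDiffAt ℝ 2 f x)
    (v w : E) :
    fderiv ℝ (fun y => fderiv ℝ f y w) x v = fderiv ℝ (fun y => fderiv ℝ f y v) x w := by
  have hdf : DifferentiableAt ℝ (fderiv ℝ f) x :=
    (hf.fderiv_right (m := 1) le_rfl).differentiableAt one_ne_zero
  simp only [fderiv_clm_apply hdf (differentiableAt_const _), fderiv_const_apply,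
    ContinuousLinearMap.comp_zero, zero_add, ContinuousLinearMap.flip_apply]
  exact (hf.isSymmSndFDerivAt (by simp)).eq v w

section PartialDerivatives

variable {f a b : ℝ × ℝ → ℝ} {x : ℝ × ℝ}

lemma ContDiffAt.pS {n : WithTop ℕ∞} (hf : ContDiffAt ℝ (n + 1) f x) : ContDiffAt ℝ n (pS f) x :=
  (hf.fderiv_right le_rfl).clm_apply contDiffAt_const

lemma pV_pS_eq_pS_pV (hf : ContDiffAt ℝ 2 f x) : pV (pS f) x = pS (pV f) x :=
  hf.fderiv_fderiv_apply_comm (0, 1) (1, 0)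

lemma pV_eq_pS_of_partials_eq_mul (hf : ContDiffAt ℝ 2 f x) (hfx : f x ≠ 0)
    (ha : DifferentiableAt ℝ a x) (hb : DifferentiableAt ℝ b x)
    (hpS : ∀ᶠ y in 𝓝 x, pS f y = f y * a y) (hpV : ∀ᶠ y in 𝓝 x, pV f y = f y * b y) :
    pV a x = pS b x := by
  have hfd : DifferentiableAt ℝ f x := hf.differentiableAt two_ne_zero
  have hVS : pV (pS f) x = pV f x * a x + f x * pV a x := by
    simp only [pV, (EventuallyEq.fderiv_eq hpS : fderiv ℝ (pS f) x = _)]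
    exact fderiv_fun_mul_apply hfd ha _
  have hSV : pS (pV f) x = pS f x * b x + f x * pS b x := by
    simp only [pS, (EventuallyEq.fderiv_eq hpV : fderiv ℝ (pV f) x = _)]
    exact fderiv_fun_mul_apply hfd hb _
  have h := pV_pS_eq_pS_pV hf
  rw [hVS, hSV, hpS.self_of_nhds, hpV.self_of_nhds] at h
  exact mul_left_cancel₀ hfx (by linear_combination h)

end PartialDerivatives

theorem identity_I_general
    (D : Set (ℝ × ℝ)) (hD : IsOpen D)
    (U Cv α k : ℝ × ℝ → ℝ)
    (hU : ContDiffOn ℝ (⊤ : ℕ∞) U D)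
    (hCv : ContDiffOn ℝ (⊤ : ℕ∞) Cv D)
    (hα : ContDiffOn ℝ (⊤ : ℕ∞) α D)
    (hk : ContDiffOn ℝ (⊤ : ℕ∞) k D)
    (hT0 : ∀ x ∈ D, pS U x ≠ 0)
    (hCv0 : ∀ x ∈ D, Cv x ≠ 0)
    (hk0 : ∀ x ∈ D, k x ≠ 0)
    (h11 : ∀ x ∈ D, e11 U x = pS U x / Cv x)
    (h12 : ∀ x ∈ D, e12 U x = -(pS U x * α x) / (k x * Cv x))
    :
    ∀ x ∈ D,
      pV Cv x + (α x / k x) * pS Cv x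
        = (Cv x / k x) * pS α x - (Cv x * α x / (k x) ^ 2) * pS k x := by
  intro x hx
  have hDx : D ∈ 𝓝 x := hD.mem_nhds hx
  have hdiff {f : ℝ × ℝ → ℝ} (hf : ContDiffOn ℝ (⊤ : ℕ∞) f D) : DifferentiableAt ℝ f x :=
    (hf.contDiffAt hDx).differentiableAt (by simp)
  have hCvx := hCv0 x hx
  have hkx := hk0 x hx
  have hkCvx : k x * Cv x ≠ 0 := mul_ne_zero hkx hCvx
  have dkCv : DifferentiableAt ℝ (fun y => k y * Cv y) x := (hdiff hk).fun_mul (hdiff hCv)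
  have key : pV (fun y => (Cv y)⁻¹) x = pS (fun y => -α y * (k y * Cv y)⁻¹) x := by
    refine pV_eq_pS_of_partials_eq_mul ((hU.contDiffAt hDx).of_le ?_).pS (hT0 x hx)
      ((hdiff hCv).fun_inv hCvx) ((hdiff hα).fun_neg.fun_mul (dkCv.fun_inv hkCvx))
      (eventually_of_mem hDx fun y hy => ?_) (eventually_of_mem hDx fun y hy => ?_)
    · exact WithTop.coe_le_coe.mpr le_top
    · rw [← e11, h11 y hy, div_eq_mul_inv]
    · rw [← e12, h12 y hy]; ring
  simp only [pS, pV] at key ⊢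
  rw [fderiv_fun_inv_apply (hdiff hCv) hCvx,
    fderiv_fun_mul_apply (hdiff hα).fun_neg (dkCv.fun_inv hkCvx),
    fderiv_fun_inv_apply dkCv hkCvx, fderiv_fun_neg, neg_apply,
    fderiv_fun_mul_apply (hdiff hk) (hdiff hCv)] at key
  field_simp at key ⊢
  linear_combination -key

/-- Identity I: for an elementary thermodynamical system with internal energy `U(S,V)`,
temperature `T = ∂U/∂S`, heat capacity `C_v`, expansion coefficient `α` and isothermal
compressibility `k` (so that `Hess U = (1/C_v)·[[T, −Tα/k], [−Tα/k, C_p/(Vk)]]` with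
`C_p = C_v + V·T·α²/k`), one has
`∂C_v/∂V + (α/k)·∂C_v/∂S = (C_v/k)·∂α/∂S − (C_v·α/k²)·∂k/∂S` on `D`. -/
theorem identity_I
    (D : Set (ℝ × ℝ)) (hD : IsOpen D) (hDV : ∀ x ∈ D, 0 < x.2)
    (U Cv α k : ℝ × ℝ → ℝ)
    (hU : ContDiffOn ℝ (⊤ : ℕ∞) U D)
    (hCv : ContDiffOn ℝ (⊤ : ℕ∞) Cv D)
    (hα : ContDiffOn ℝ (⊤ : ℕ∞) α D)
    (hk : ContDiffOn ℝ (⊤ : ℕ∞) k D)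
    (hT0 : ∀ x ∈ D, pS U x ≠ 0)
    (hCv0 : ∀ x ∈ D, Cv x ≠ 0)
    (hk0 : ∀ x ∈ D, k x ≠ 0)
    (h11 : ∀ x ∈ D, e11 U x = pS U x / Cv x)
    (h12 : ∀ x ∈ D, e12 U x = -(pS U x * α x) / (k x * Cv x))
    (h22 : ∀ x ∈ D,
      e22 U x = (Cv x + x.2 * pS U x * α x ^ 2 / k x) / (x.2 * k x * Cv x))
    :
    ∀ x ∈ D,
      pV Cv x + (α x / k x) * pS Cv x
        = (Cv x / k x) * pS α x - (Cv x * α x / (k x) ^ 2) * pS k x :=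
  identity_I_general D hD U Cv α k hU hCv hα hk hT0 hCv0 hk0 h11 h12
end

section
/- Let I_V ⊆ ℝ be an open interval, c ≠ 0 a real constant, f₁, f₂ : I_V → ℝ real-analytic with f₁ > 0 on I_V, and U(S,V) = f₁(V)·e^{S/c} − c·f₂(V) on D = ℝ × I_V. Assume det Hess U ≠ 0 at every point of D. Then the scalar curvature of the Hessian metric of U vanishes identically on D if and only if either (i) there exist constants c₁ > 0 and c₂ ∈ ℝ with f₁(V) = c₁·e^{c₂·V} for all V ∈ I_V, or (ii) there exist constants A, B ∈ ℝ with f₂(V) = A·V + B for all V ∈ I_V. -/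
/-!
The family `g(V)·e^{S/c} − c·h(V)` is closed under `∂_S` and `∂_V`, so every entry of `M` lies in
it, and on the strip `ℝ × I_V` one finds
`det M = −(e^{2S/c}/c³)·f₂''·(f₁f₁'' − f₁'²)`. Since `det η ≠ 0`, the curvature vanishes exactly
where this product does, and by the identity theorem on the interval one factor vanishes
identically. Finally `f₂'' ≡ 0` means `f₂` is affine, and `f₁f₁'' − f₁'² = f₁²·(log f₁)'' ≡ 0` means
`log f₁` is affine.
-/

open Set Real

noncomputable def constHeatCapacityLaw (c : ℝ) (f₁ f₂ : ℝ → ℝ) (x : ℝ × ℝ) : ℝ :=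
  f₁ x.2 * exp (x.1 / c) - c * f₂ x.2

theorem Filter.EventuallyEq.pS_eq {F G : ℝ × ℝ → ℝ} {x : ℝ × ℝ} (h : F =ᶠ[nhds x] G) :
    pS F x = pS G x := by
  rw [pS, pS, h.fderiv_eq]

theorem Filter.EventuallyEq.pV_eq {F G : ℝ × ℝ → ℝ} {x : ℝ × ℝ} (h : F =ᶠ[nhds x] G) :
    pV F x = pV G x := by
  rw [pV, pV, h.fderiv_eq]

section ConstHeatCapacityLaw

variable {c : ℝ} {g h g' h' : ℝ → ℝ} {s : Set ℝ} {F : ℝ × ℝ → ℝ} {x : ℝ × ℝ}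

open ContinuousLinearMap in
theorem hasFDerivAt_constHeatCapacityLaw {a b : ℝ} (hg : HasDerivAt g a x.2)
    (hh : HasDerivAt h b x.2) :
    HasFDerivAt (constHeatCapacityLaw c g h)
      ((g x.2 * exp (x.1 / c) / c) • fst ℝ ℝ ℝ + (a * exp (x.1 / c) - c * b) • snd ℝ ℝ ℝ) x := by
  have hexp : HasDerivAt (fun S => exp (S / c)) (exp (x.1 / c) / c) x.1 := by
    simpa [div_eq_mul_inv] using ((hasDerivAt_id x.1).div_const c).exp
  refine (((hg.comp_hasFDerivAt x hasFDerivAt_snd).mul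
    (hexp.comp_hasFDerivAt x hasFDerivAt_fst)).sub
    ((hh.comp_hasFDerivAt x hasFDerivAt_snd).const_mul c)).congr_fderiv ?_
  ext <;> simp <;> ring

theorem pS_constHeatCapacityLaw (hg : DifferentiableAt ℝ g x.2) (hh : DifferentiableAt ℝ h x.2) :
    pS (constHeatCapacityLaw c g h) x = constHeatCapacityLaw c (fun v => g v / c) 0 x := by
  rw [pS, (hasFDerivAt_constHeatCapacityLaw hg.hasDerivAt hh.hasDerivAt).fderiv]
  simp [constHeatCapacityLaw, div_mul_eq_mul_div]

theorem pV_constHeatCapacityLaw (hg : HasDerivAt g (g' x.2) x.2)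
    (hh : HasDerivAt h (h' x.2) x.2) :
    pV (constHeatCapacityLaw c g h) x = constHeatCapacityLaw c g' h' x := by
  rw [pV, (hasFDerivAt_constHeatCapacityLaw hg hh).fderiv]
  simp [constHeatCapacityLaw]

theorem eqOn_pS_of_eqOn_constHeatCapacityLaw (hs : IsOpen s)
    (hg : ∀ v ∈ s, DifferentiableAt ℝ g v) (hh : ∀ v ∈ s, DifferentiableAt ℝ h v)
    (hF : EqOn F (constHeatCapacityLaw c g h) (Prod.snd ⁻¹' s)) :
    EqOn (pS F) (constHeatCapacityLaw c (fun v => g v / c) 0) (Prod.snd ⁻¹' s) := fun x hx => by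
  rw [(hF.eventuallyEq_of_mem ((hs.preimage continuous_snd).mem_nhds hx)).pS_eq]
  exact pS_constHeatCapacityLaw (hg _ hx) (hh _ hx)

theorem eqOn_pV_of_eqOn_constHeatCapacityLaw (hs : IsOpen s)
    (hg : ∀ v ∈ s, HasDerivAt g (g' v) v) (hh : ∀ v ∈ s, HasDerivAt h (h' v) v)
    (hF : EqOn F (constHeatCapacityLaw c g h) (Prod.snd ⁻¹' s)) :
    EqOn (pV F) (constHeatCapacityLaw c g' h') (Prod.snd ⁻¹' s) := fun x hx => by
  rw [(hF.eventuallyEq_of_mem ((hs.preimage continuous_snd).mem_nhds hx)).pV_eq]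
  exact pV_constHeatCapacityLaw (hg _ hx) (hh _ hx)

end ConstHeatCapacityLaw

theorem ContDiffOn.hasDerivAt_deriv {n : WithTop ℕ∞} {f : ℝ → ℝ} {s : Set ℝ}
    (hf : ContDiffOn ℝ n f s) (hs : IsOpen s) (hn : n ≠ 0) {v : ℝ} (hv : v ∈ s) :
    HasDerivAt f (deriv f v) v :=
  ((hf.differentiableOn hn v hv).differentiableAt (hs.mem_nhds hv)).hasDerivAt

theorem eqOn_detM_constHeatCapacityLaw {c : ℝ} {g h : ℝ → ℝ} {s : Set ℝ} (hc : c ≠ 0)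
    (hs : IsOpen s) (hg : ContDiffOn ℝ 3 g s) (hh : ContDiffOn ℝ 3 h s) :
    EqOn (detM (constHeatCapacityLaw c g h))
      (fun x => -(exp (x.1 / c) ^ 2 / c ^ 3) * deriv (deriv h) x.2 *
        (g x.2 * deriv (deriv g) x.2 - deriv g x.2 ^ 2)) (Prod.snd ⁻¹' s) := by
  have D₀ {f : ℝ → ℝ} (hf : ContDiffOn ℝ 3 f s) : ∀ v ∈ s, HasDerivAt f (deriv f v) v :=
    fun v => hf.hasDerivAt_deriv hs (by norm_num)
  have D₁ {f : ℝ → ℝ} (hf : ContDiffOn ℝ 3 f s) :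
      ∀ v ∈ s, HasDerivAt (deriv f) (deriv (deriv f) v) v :=
    fun v => (hf.deriv_of_isOpen hs (m := 2) (by norm_num)).hasDerivAt_deriv hs (by norm_num)
  have D₂ {f : ℝ → ℝ} (hf : ContDiffOn ℝ 3 f s) :
      ∀ v ∈ s, HasDerivAt (deriv (deriv f)) (deriv (deriv (deriv f)) v) v :=
    fun v => ((hf.deriv_of_isOpen hs (m := 2) (by norm_num)).deriv_of_isOpen hs (m := 1)
      (by norm_num)).hasDerivAt_deriv hs (by norm_num)
  have hdiv {f : ℝ → ℝ} {f' : ℝ → ℝ} (hf : ∀ v ∈ s, HasDerivAt f (f' v) v) :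
      ∀ v ∈ s, HasDerivAt (fun v => f v / c) (f' v / c) v :=
    fun v hv => (hf v hv).div_const c
  have hzero : ∀ v ∈ s, HasDerivAt (0 : ℝ → ℝ) ((0 : ℝ → ℝ) v) v :=
    fun v _ => hasDerivAt_const v 0
  have hdiff (f : ℝ → ℝ) {f' : ℝ → ℝ} (hf : ∀ v ∈ s, HasDerivAt f (f' v) v) :
      ∀ v ∈ s, DifferentiableAt ℝ f v := fun v hv => (hf v hv).differentiableAt
  have hF := eqOn_refl (constHeatCapacityLaw c g h) (Prod.snd ⁻¹' s)
  have hS := eqOn_pS_of_eqOn_constHeatCapacityLaw hs (hdiff _ (D₀ hg)) (hdiff _ (D₀ hh)) hF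
  have hV := eqOn_pV_of_eqOn_constHeatCapacityLaw hs (D₀ hg) (D₀ hh) hF
  have h11 := eqOn_pS_of_eqOn_constHeatCapacityLaw hs (hdiff _ (hdiv (D₀ hg))) (hdiff _ hzero) hS
  have h12 := eqOn_pV_of_eqOn_constHeatCapacityLaw hs (hdiv (D₀ hg)) hzero hS
  have h22 := eqOn_pV_of_eqOn_constHeatCapacityLaw hs (D₁ hg) (D₁ hh) hV
  have hS11 :=
    eqOn_pS_of_eqOn_constHeatCapacityLaw hs (hdiff _ (hdiv (hdiv (D₀ hg)))) (hdiff _ hzero) h11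
  have hV11 := eqOn_pV_of_eqOn_constHeatCapacityLaw hs (hdiv (hdiv (D₀ hg))) hzero h11
  have hS12 := eqOn_pS_of_eqOn_constHeatCapacityLaw hs (hdiff _ (hdiv (D₁ hg))) (hdiff _ hzero) h12
  have hV12 := eqOn_pV_of_eqOn_constHeatCapacityLaw hs (hdiv (D₁ hg)) hzero h12
  have hS22 := eqOn_pS_of_eqOn_constHeatCapacityLaw hs (hdiff _ (D₂ hg)) (hdiff _ (D₂ hh)) h22
  have hV22 := eqOn_pV_of_eqOn_constHeatCapacityLaw hs (D₂ hg) (D₂ hh) h22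
  intro x hx
  rw [detM, Matrix.det_fin_three]
  simp only [Matrix.of_apply, Matrix.cons_val', Matrix.cons_val_zero, Matrix.empty_val',
    Matrix.cons_val_fin_one, Matrix.cons_val_one, Matrix.cons_val_two, Matrix.head_cons,
    Matrix.tail_cons, Matrix.head_fin_const]
  rw [e11, e12, e22, h11 hx, h12 hx, h22 hx, hS11 hx, hV11 hx, hS12 hx, hV12 hx, hS22 hx, hV22 hx]
  simp only [constHeatCapacityLaw, Pi.zero_apply]
  field_simp
  ring

section OneVariable

variable {f : ℝ → ℝ} {s : Set ℝ}

theorem forall_deriv_deriv_eq_zero_iff_exists_affine (hs : IsOpen s) (hs' : IsPreconnected s)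
    (hf : ContDiffOn ℝ 2 f s) :
    (∀ v ∈ s, deriv (deriv f) v = 0) ↔ ∃ A B : ℝ, ∀ v ∈ s, f v = A * v + B := by
  constructor
  · intro hf''
    obtain ⟨A, hA⟩ := hs.exists_is_const_of_deriv_eq_zero hs'
      ((hf.deriv_of_isOpen hs (m := 1) (by norm_num)).differentiableOn (by norm_num)) hf''
    obtain ⟨B, hB⟩ := hs.exists_eq_add_of_deriv_eq hs' (hf.differentiableOn (by norm_num))
      ((differentiable_id.const_mul A).differentiableOn) fun v hv => by simp [hA v hv]
    exact ⟨A, B, hB⟩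
  · rintro ⟨A, B, hAB⟩ v hv
    have hf' : EqOn (deriv f) (fun _ => A) s := fun w hw => by
      rw [(Filter.eventuallyEq_of_mem (hs.mem_nhds hw) hAB).deriv_eq]
      simp
    rw [(hf'.eventuallyEq_of_mem (hs.mem_nhds hv)).deriv_eq, deriv_const]

theorem deriv_deriv_log_comp (hs : IsOpen s) (hf : ContDiffOn ℝ 2 f s) (hf0 : ∀ v ∈ s, f v ≠ 0)
    {v : ℝ} (hv : v ∈ s) :
    deriv (deriv fun w => log (f w)) v = (f v * deriv (deriv f) v - deriv f v ^ 2) / f v ^ 2 := by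
  have hlog : EqOn (deriv fun w => log (f w)) (fun w => deriv f w / f w) s := fun w hw =>
    deriv.log ((hf.differentiableOn (by norm_num) w hw).differentiableAt (hs.mem_nhds hw))
      (hf0 w hw)
  rw [(hlog.eventuallyEq_of_mem (hs.mem_nhds hv)).deriv_eq,
    (((hf.deriv_of_isOpen hs (m := 1) (by norm_num)).hasDerivAt_deriv hs (by norm_num) hv).fun_div
      (hf.hasDerivAt_deriv hs (by norm_num) hv) (hf0 v hv)).deriv]
  ring

theorem forall_mul_deriv_deriv_sub_sq_eq_zero_iff_exists_exp (hs : IsOpen s)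
    (hs' : IsPreconnected s) (hf : ContDiffOn ℝ 2 f s) (hf0 : ∀ v ∈ s, 0 < f v) :
    (∀ v ∈ s, f v * deriv (deriv f) v - deriv f v ^ 2 = 0) ↔
      ∃ c₁ c₂ : ℝ, 0 < c₁ ∧ ∀ v ∈ s, f v = c₁ * exp (c₂ * v) := by
  have hf0' : ∀ v ∈ s, f v ≠ 0 := fun v hv => (hf0 v hv).ne'
  calc (∀ v ∈ s, f v * deriv (deriv f) v - deriv f v ^ 2 = 0)
      ↔ ∀ v ∈ s, deriv (deriv fun w => log (f w)) v = 0 := by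
        refine forall₂_congr fun v hv => ?_
        rw [deriv_deriv_log_comp hs hf hf0' hv, div_eq_zero_iff]
        simp [hf0' v hv]
    _ ↔ ∃ A B : ℝ, ∀ v ∈ s, log (f v) = A * v + B :=
        forall_deriv_deriv_eq_zero_iff_exists_affine hs hs' (hf.log hf0')
    _ ↔ ∃ c₁ c₂ : ℝ, 0 < c₁ ∧ ∀ v ∈ s, f v = c₁ * exp (c₂ * v) := by
      constructor
      · rintro ⟨A, B, h⟩
        refine ⟨exp B, A, exp_pos B, fun v hv => ?_⟩
        rw [← exp_add, add_comm, ← h v hv, exp_log (hf0 v hv)]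
      · rintro ⟨c₁, c₂, hc₁, h⟩
        refine ⟨c₂, log c₁, fun v hv => ?_⟩
        rw [h v hv, log_mul hc₁.ne' (exp_pos _).ne', log_exp, add_comm]

end OneVariable

theorem scalarCurv_eq_zero_iff_detM_eq_zero {E : ℝ × ℝ → ℝ} {x : ℝ × ℝ}
    (h : detHess E x ≠ 0) : scalarCurv E x = 0 ↔ detM E x = 0 := by
  simp [scalarCurv, h]

/-- For `U(S,V) = f₁(V)·e^{S/c} − c·f₂(V)` on `D = ℝ × I_V` (with `c ≠ 0`, `f₁, f₂`
real-analytic on the open interval `I_V`, `f₁ > 0` on `I_V`, and `det Hess U ≠ 0` on `D`),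
the scalar curvature of the Hessian metric of `U` vanishes identically on `D` if and only if
either `f₁(V) = c₁·e^{c₂V}` for some constants `c₁ > 0`, `c₂ ∈ ℝ`, or `f₂(V) = A·V + B` for
some constants `A, B ∈ ℝ`. -/
theorem zero_curvature_classification_constant_heat_capacity
    (IV : Set ℝ) (hIVopen : IsOpen IV) (hIVint : IV.OrdConnected)
    (c : ℝ) (hc : c ≠ 0) (f₁ f₂ : ℝ → ℝ)
    (hf₁ : AnalyticOnNhd ℝ f₁ IV) (hf₂ : AnalyticOnNhd ℝ f₂ IV)
    (hf₁pos : ∀ V ∈ IV, 0 < f₁ V)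
    (U : ℝ × ℝ → ℝ)
    (hU : ∀ x : ℝ × ℝ, U x = f₁ x.2 * Real.exp (x.1 / c) - c * f₂ x.2)
    (hnd : ∀ x : ℝ × ℝ, x.2 ∈ IV → detHess U x ≠ 0) :
    (∀ x : ℝ × ℝ, x.2 ∈ IV → scalarCurv U x = 0) ↔
      ((∃ c₁ c₂ : ℝ, 0 < c₁ ∧ ∀ V ∈ IV, f₁ V = c₁ * Real.exp (c₂ * V)) ∨
       (∃ A B : ℝ, ∀ V ∈ IV, f₂ V = A * V + B)) := by
  have hW : AnalyticOnNhd ℝ (fun v => f₁ v * deriv (deriv f₁) v - deriv f₁ v ^ 2) IV :=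
    (hf₁.mul hf₁.deriv.deriv).sub (hf₁.deriv.pow 2)
  have hU' : U = constHeatCapacityLaw c f₁ f₂ := funext hU
  have hcurv : ∀ x : ℝ × ℝ, x.2 ∈ IV → (scalarCurv U x = 0 ↔
      deriv (deriv f₂) x.2 * (f₁ x.2 * deriv (deriv f₁) x.2 - deriv f₁ x.2 ^ 2) = 0) := by
    intro x hx
    rw [scalarCurv_eq_zero_iff_detM_eq_zero (hnd x hx), hU',
      eqOn_detM_constHeatCapacityLaw hc hIVopen hf₁.contDiffOn_of_completeSpace
        hf₂.contDiffOn_of_completeSpace hx]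
    simp [hc, exp_ne_zero]
  rw [Or.comm, ← forall_mul_deriv_deriv_sub_sq_eq_zero_iff_exists_exp hIVopen
      hIVint.isPreconnected hf₁.contDiffOn_of_completeSpace hf₁pos,
    ← forall_deriv_deriv_eq_zero_iff_exists_affine hIVopen hIVint.isPreconnected
      hf₂.contDiffOn_of_completeSpace]
  constructor
  · intro h
    exact AnalyticOnNhd.eq_zero_or_eq_zero_of_mul_eq_zero hf₂.deriv.deriv hW
      (fun v hv => (hcurv (0, v) hv).1 (h _ hv)) hIVint.isPreconnected
  · rintro (h | h) x hx <;> simp [hcurv x hx, h x.2 hx]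
end

section
/- Identity III: Under the elementary-system hypotheses, if moreover C_v is a constant function on D, then at every point of D one has k·(∂α/∂S) = α·(∂k/∂S) (equivalently, (∂α/∂k)_V = α/k wherever this makes sense). -/
open Filter Topology
open scoped ContDiff

section PartialDerivatives

variable {f g : ℝ × ℝ → ℝ} {x : ℝ × ℝ} {D : Set (ℝ × ℝ)}

theorem ContDiffOn.pS_of_isOpen (hf : ContDiffOn ℝ ∞ f D) (hD : IsOpen D) :
    ContDiffOn ℝ ∞ (pS f) D :=
  ((contDiffOn_infty_iff_fderiv_of_isOpen hD).1 hf).2.clm_apply contDiffOn_const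

theorem ContDiffOn.pV_of_isOpen (hf : ContDiffOn ℝ ∞ f D) (hD : IsOpen D) :
    ContDiffOn ℝ ∞ (pV f) D :=
  ((contDiffOn_infty_iff_fderiv_of_isOpen hD).1 hf).2.clm_apply contDiffOn_const

theorem Filter.EventuallyEq.pS_eq_s14 (h : f =ᶠ[𝓝 x] g) : pS f x = pS g x := by
  rw [pS, pS, h.fderiv_eq]

theorem Filter.EventuallyEq.pV_eq_s14 (h : f =ᶠ[𝓝 x] g) : pV f x = pV g x := by
  rw [pV, pV, h.fderiv_eq]

theorem pS_const_mul (c : ℝ) : pS (fun y => c * f y) x = c * pS f x := by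
  simp only [pS]
  rw [show (fun y => c * f y) = c • f from rfl, fderiv_const_smul_field]
  rfl

theorem pV_const_mul (c : ℝ) : pV (fun y => c * f y) x = c * pV f x := by
  simp only [pV]
  rw [show (fun y => c * f y) = c • f from rfl, fderiv_const_smul_field]
  rfl

theorem pS_mul (hf : DifferentiableAt ℝ f x) (hg : DifferentiableAt ℝ g x) :
    pS (fun y => f y * g y) x = pS f x * g x + f x * pS g x := by
  simp only [pS, fderiv_fun_mul hf hg, add_apply, smul_apply, smul_eq_mul]
  ring

theorem pS_pV_comm (hf : ContDiffAt ℝ 2 f x) : pS (pV f) x = pV (pS f) x := by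
  have hsymm : IsSymmSndFDerivAt ℝ f x :=
    hf.isSymmSndFDerivAt (by simp [minSmoothness_of_isRCLikeNormedField])
  have hdf : DifferentiableAt ℝ (fderiv ℝ f) x :=
    (hf.fderiv_right (m := 1) le_rfl).differentiableAt one_ne_zero
  have hsecond (v w : ℝ × ℝ) :
      fderiv ℝ (fun y => fderiv ℝ f y v) x w = fderiv ℝ (fderiv ℝ f) x w v := by
    rw [fderiv_clm_apply hdf (differentiableAt_const v)]
    simp
  unfold pS pV
  rw [hsecond, hsecond, hsymm.eq]

end PartialDerivatives

theorem identity_III_general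
    (D : Set (ℝ × ℝ)) (hD : IsOpen D)
    (U Cv α k : ℝ × ℝ → ℝ)
    (hU : ContDiffOn ℝ (⊤ : ℕ∞) U D)
    (hα : ContDiffOn ℝ (⊤ : ℕ∞) α D)
    (hk : ContDiffOn ℝ (⊤ : ℕ∞) k D)
    (hT0 : ∀ x ∈ D, pS U x ≠ 0)
    (hCv0 : ∀ x ∈ D, Cv x ≠ 0)
    (hk0 : ∀ x ∈ D, k x ≠ 0)
    (h11 : ∀ x ∈ D, e11 U x = pS U x / Cv x)
    (h12 : ∀ x ∈ D, e12 U x = -(pS U x * α x) / (k x * Cv x))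
    (cv : ℝ) (hconst : ∀ x ∈ D, Cv x = cv) :
    ∀ x ∈ D, k x * pS α x = α x * pS k x := by
  intro x hx
  have hDx : D ∈ 𝓝 x := hD.mem_nhds hx
  have hT : ContDiffOn ℝ ∞ (pS U) D := hU.pS_of_isOpen hD
  have hdiff {f : ℝ × ℝ → ℝ} (hf : ContDiffOn ℝ ∞ f D) : DifferentiableAt ℝ f x :=
    (hf.contDiffAt hDx).differentiableAt (by simp)
  have hcv : cv ≠ 0 := hconst x hx ▸ hCv0 x hx
  have hT_eq : (fun y => cv * e11 U y) =ᶠ[𝓝 x] pS U := by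
    filter_upwards [hDx] with y hy
    rw [h11 y hy, hconst y hy]
    field_simp
  have hTα_eq : (fun y => -cv * (k y * e12 U y)) =ᶠ[𝓝 x] fun y => pS U y * α y := by
    filter_upwards [hDx] with y hy
    rw [h12 y hy, hconst y hy]
    field_simp [hk0 y hy]
  have hV : cv * pV (e11 U) x = e12 U x := by
    rw [← pV_const_mul]
    exact hT_eq.pV_eq_s14
  have hS : -cv * (pS k x * e12 U x + k x * pS (e12 U) x) = e11 U x * α x + pS U x * pS α x := by
    have h := hTα_eq.pS_eq_s14
    rwa [pS_const_mul, pS_mul (hdiff hk) (hdiff (f := e12 U) (hT.pV_of_isOpen hD)),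
      pS_mul (hdiff hT) (hdiff hα)] at h
  have hsymm : pS (e12 U) x = pV (e11 U) x :=
    pS_pV_comm ((hT.contDiffAt hDx).of_le (WithTop.coe_le_coe.2 le_top))
  have key : cv * pS U x * (k x * pS α x - α x * pS k x) = 0 := by
    linear_combination (-cv * k x) * hS + (cv * pS k x + k x) * hTα_eq.self_of_nhds
      - (k x * α x) * hT_eq.self_of_nhds - (cv ^ 2 * k x ^ 2) * hsymm - (cv * k x ^ 2) * hV
  linear_combination (mul_eq_zero.1 key).resolve_left (mul_ne_zero hcv (hT0 x hx))

/-- Identity III: for an elementary thermodynamical system (hypotheses as in Identity I) in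
which `C_v` is constant on `D`, one has `k·∂α/∂S = α·∂k/∂S` on `D`
(i.e. `(∂α/∂k)_V = α/k` wherever this makes sense). -/
theorem identity_III
    (D : Set (ℝ × ℝ)) (hD : IsOpen D) (hDV : ∀ x ∈ D, 0 < x.2)
    (U Cv α k : ℝ × ℝ → ℝ)
    (hU : ContDiffOn ℝ (⊤ : ℕ∞) U D)
    (hCv : ContDiffOn ℝ (⊤ : ℕ∞) Cv D)
    (hα : ContDiffOn ℝ (⊤ : ℕ∞) α D)
    (hk : ContDiffOn ℝ (⊤ : ℕ∞) k D)
    (hT0 : ∀ x ∈ D, pS U x ≠ 0)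
    (hCv0 : ∀ x ∈ D, Cv x ≠ 0)
    (hk0 : ∀ x ∈ D, k x ≠ 0)
    (h11 : ∀ x ∈ D, e11 U x = pS U x / Cv x)
    (h12 : ∀ x ∈ D, e12 U x = -(pS U x * α x) / (k x * Cv x))
    (h22 : ∀ x ∈ D,
      e22 U x = (Cv x + x.2 * pS U x * α x ^ 2 / k x) / (x.2 * k x * Cv x))
    (cv : ℝ) (hconst : ∀ x ∈ D, Cv x = cv) :
    ∀ x ∈ D, k x * pS α x = α x * pS k x :=
  identity_III_general D hD U Cv α k hU hα hk hT0 hCv0 hk0 h11 h12 cv hconst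
end

section
/- Let c > 0 and r > 0 be real constants and let U(S,V) = c·V^{−r/c}·e^{S/c} on D = ℝ × (0,∞) (the molar internal energy of the ideal gas with heat capacity C_v = c and gas constant r). Then at every point of D: det Hess U = (r/c)·e^{2S/c}·V^{−2(c+r)/c} > 0, so the Weinhold metric Hess U is positive definite on D, and the scalar curvature of the Hessian metric of U vanishes identically on D. -/
/-!
Every function `k · V^a · e^{S/c}` is an eigenfunction of `∂/∂S` with eigenvalue `1/c`, and its
partial derivatives are again of this form. Hence each entry `η_ij` of the Hessian metric satisfies
`∂₁η_ij = η_ij / c`: the first two columns of `M` are proportional, so `det M = 0` and the scalar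
curvature vanishes.
-/

open Filter Topology Matrix

noncomputable def expRpowMonomial (c a k : ℝ) : ℝ × ℝ → ℝ :=
  fun p => k * p.2 ^ a * Real.exp (p.1 / c)

lemma fderiv_congr_of_eqOn_snd_pos {f g : ℝ × ℝ → ℝ} (h : ∀ p : ℝ × ℝ, 0 < p.2 → f p = g p)
    {x : ℝ × ℝ} (hx : 0 < x.2) : fderiv ℝ f x = fderiv ℝ g x :=
  (eventuallyEq_of_mem ((isOpen_lt continuous_const continuous_snd).mem_nhds hx) h).fderiv_eq

lemma pS_congr_of_eqOn_snd_pos {f g : ℝ × ℝ → ℝ} (h : ∀ p : ℝ × ℝ, 0 < p.2 → f p = g p)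
    {x : ℝ × ℝ} (hx : 0 < x.2) : pS f x = pS g x := by
  rw [pS, pS, fderiv_congr_of_eqOn_snd_pos h hx]

lemma pV_congr_of_eqOn_snd_pos {f g : ℝ × ℝ → ℝ} (h : ∀ p : ℝ × ℝ, 0 < p.2 → f p = g p)
    {x : ℝ × ℝ} (hx : 0 < x.2) : pV f x = pV g x := by
  rw [pV, pV, fderiv_congr_of_eqOn_snd_pos h hx]

lemma Matrix.posDef_fin_two_of_pos_of_det_pos {A B D : ℝ} (hA : 0 < A)
    (hdet : 0 < A * D - B ^ 2) : (!![A, B; B, D] : Matrix (Fin 2) (Fin 2) ℝ).PosDef := by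
  refine Matrix.PosDef.of_dotProduct_mulVec_pos ?_ fun v hv => ?_
  · ext i j
    fin_cases i <;> fin_cases j <;> simp
  have hq : star v ⬝ᵥ (!![A, B; B, D] *ᵥ v) = A * v 0 ^ 2 + 2 * B * v 0 * v 1 + D * v 1 ^ 2 := by
    simp [dotProduct, Matrix.mulVec, Fin.sum_univ_two]
    ring
  -- `A · q(v) = (A v₀ + B v₁)² + (AD − B²) v₁²`
  rw [hq, ← mul_lt_mul_iff_of_pos_left hA, mul_zero]
  rcases eq_or_ne (v 1) 0 with h1 | h1
  · have h0 : v 0 ≠ 0 := fun h0 => hv (funext fun i => by fin_cases i <;> simp [h0, h1])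
    rw [h1]
    nlinarith [mul_pos hA (mul_pos hA (sq_pos_of_ne_zero h0))]
  · nlinarith [sq_nonneg (A * v 0 + B * v 1), mul_pos hdet (sq_pos_of_ne_zero h1)]

lemma detM_eq_zero_of_pS_eq_smul {E : ℝ × ℝ → ℝ} {x : ℝ × ℝ} (t : ℝ)
    (h11 : pS (e11 E) x = t * e11 E x) (h12 : pS (e12 E) x = t * e12 E x)
    (h22 : pS (e22 E) x = t * e22 E x) : detM E x = 0 := by
  rw [detM, Matrix.det_fin_three]
  simp only [h11, h12, h22, of_apply, cons_val', cons_val_zero, cons_val_fin_one, cons_val_one,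
    cons_val]
  ring

namespace expRpowMonomial

variable {c a k : ℝ} {x : ℝ × ℝ}

lemma hasFDerivAt (hx : 0 < x.2) :
    HasFDerivAt (expRpowMonomial c a k)
      ((k / c * x.2 ^ a * Real.exp (x.1 / c)) • ContinuousLinearMap.fst ℝ ℝ ℝ +
       (k * a * x.2 ^ (a - 1) * Real.exp (x.1 / c)) • ContinuousLinearMap.snd ℝ ℝ ℝ) x := by
  have hV : HasFDerivAt (fun p : ℝ × ℝ => p.2 ^ a)
      ((a * x.2 ^ (a - 1)) • ContinuousLinearMap.snd ℝ ℝ ℝ) x :=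
    (Real.hasDerivAt_rpow_const (Or.inl hx.ne')).comp_hasFDerivAt x hasFDerivAt_snd
  have hS : HasFDerivAt (fun p : ℝ × ℝ => Real.exp (p.1 / c))
      ((Real.exp (x.1 / c) * (1 / c)) • ContinuousLinearMap.fst ℝ ℝ ℝ) x :=
    ((hasDerivAt_id x.1).div_const c).exp.comp_hasFDerivAt x hasFDerivAt_fst
  refine ((hV.const_mul k).mul hS).congr_fderiv ?_
  ext <;> simp <;> ring

lemma pS_eq (hx : 0 < x.2) : pS (expRpowMonomial c a k) x = expRpowMonomial c a (k / c) x := by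
  simp [pS, (hasFDerivAt hx).fderiv, expRpowMonomial]

lemma pV_eq (hx : 0 < x.2) :
    pV (expRpowMonomial c a k) x = expRpowMonomial c (a - 1) (k * a) x := by
  simp [pV, (hasFDerivAt hx).fderiv, expRpowMonomial]

lemma e11_eq (hx : 0 < x.2) :
    e11 (expRpowMonomial c a k) x = expRpowMonomial c a (k / c / c) x := by
  rw [e11, pS_congr_of_eqOn_snd_pos (fun _ => pS_eq) hx, pS_eq hx]

lemma e12_eq (hx : 0 < x.2) :
    e12 (expRpowMonomial c a k) x = expRpowMonomial c (a - 1) (k / c * a) x := by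
  rw [e12, pV_congr_of_eqOn_snd_pos (fun _ => pS_eq) hx, pV_eq hx]

lemma e22_eq (hx : 0 < x.2) :
    e22 (expRpowMonomial c a k) x = expRpowMonomial c (a - 1 - 1) (k * a * (a - 1)) x := by
  rw [e22, pV_congr_of_eqOn_snd_pos (fun _ => pV_eq) hx, pV_eq hx]

lemma pS_eq_div_of_eqOn {f : ℝ × ℝ → ℝ}
    (hf : ∀ p : ℝ × ℝ, 0 < p.2 → f p = expRpowMonomial c a k p) (hx : 0 < x.2) :
    pS f x = f x / c := by
  rw [pS_congr_of_eqOn_snd_pos hf hx, pS_eq hx, hf x hx, expRpowMonomial, expRpowMonomial]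
  ring

lemma detHess_eq (hx : 0 < x.2) :
    detHess (expRpowMonomial c a k) x
      = -(k ^ 2 * a / c ^ 2) * Real.exp (2 * x.1 / c) * x.2 ^ (2 * (a - 1)) := by
  have hpow : x.2 ^ a = x.2 ^ (a - 1) * x.2 ∧ x.2 ^ (a - 1 - 1) = x.2 ^ (a - 1) / x.2 := by
    constructor <;> rw [Real.rpow_sub hx, Real.rpow_one]
    rw [div_mul_cancel₀ _ hx.ne']
  have hsq : x.2 ^ (2 * (a - 1)) = (x.2 ^ (a - 1)) ^ 2 := by
    rw [mul_comm, Real.rpow_mul hx.le, Real.rpow_two]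
  have hexp : Real.exp (2 * x.1 / c) = Real.exp (x.1 / c) ^ 2 := by
    rw [← Real.exp_nat_mul]
    ring_nf
  rw [detHess, e11_eq hx, e12_eq hx, e22_eq hx, hsq, hexp]
  simp only [expRpowMonomial, hpow.1, hpow.2]
  field_simp
  ring

lemma scalarCurv_eq_zero (hx : 0 < x.2) : scalarCurv (expRpowMonomial c a k) x = 0 := by
  have hM : detM (expRpowMonomial c a k) x = 0 :=
    detM_eq_zero_of_pS_eq_smul (1 / c)
      (by rw [pS_eq_div_of_eqOn (fun _ => e11_eq) hx, one_div_mul_eq_div])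
      (by rw [pS_eq_div_of_eqOn (fun _ => e12_eq) hx, one_div_mul_eq_div])
      (by rw [pS_eq_div_of_eqOn (fun _ => e22_eq) hx, one_div_mul_eq_div])
  rw [scalarCurv, hM, mul_zero]

end expRpowMonomial

/-- Ideal gas `U(S,V) = c·V^{−r/c}·e^{S/c}` on `ℝ × (0,∞)` (heat capacity `C_v = c > 0`, gas
constant `r > 0`): at every point, `det Hess U = (r/c)·e^{2S/c}·V^{−2(c+r)/c} > 0`, the
Weinhold metric `Hess U` is positive definite, and the scalar curvature of the Hessian metric
vanishes. -/
theorem ideal_gas_flat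
    (c r : ℝ) (hc : 0 < c) (hr : 0 < r)
    (U : ℝ × ℝ → ℝ)
    (hU : ∀ x : ℝ × ℝ, U x = c * x.2 ^ (-(r / c)) * Real.exp (x.1 / c)) :
    ∀ x : ℝ × ℝ, 0 < x.2 →
      detHess U x = (r / c) * Real.exp (2 * x.1 / c) * x.2 ^ (-(2 * (c + r) / c)) ∧
      0 < detHess U x ∧
      (!![e11 U x, e12 U x; e12 U x, e22 U x] : Matrix (Fin 2) (Fin 2) ℝ).PosDef ∧
      scalarCurv U x = 0 := by
  obtain rfl : U = expRpowMonomial c (-(r / c)) c := funext hU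
  intro x hx
  have hdet : detHess (expRpowMonomial c (-(r / c)) c) x
      = (r / c) * Real.exp (2 * x.1 / c) * x.2 ^ (-(2 * (c + r) / c)) := by
    rw [expRpowMonomial.detHess_eq hx]
    congr 2
    · field_simp
    · field_simp; ring
  have hdet_pos : 0 < detHess (expRpowMonomial c (-(r / c)) c) x := by
    rw [hdet]; positivity
  have he11_pos : 0 < e11 (expRpowMonomial c (-(r / c)) c) x := by
    rw [expRpowMonomial.e11_eq hx, expRpowMonomial]; positivity
  exact ⟨hdet, hdet_pos, Matrix.posDef_fin_two_of_pos_of_det_pos he11_pos hdet_pos,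
    expRpowMonomial.scalarCurv_eq_zero hx⟩
end
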